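/- arXiv:1808.09420 — 2 statements merged into one kernel-verified Lean document; each statement's English description precedes it below -/
import Mathlib

section
/- Let Φ ∈ C²(Q_b) satisfy ΔΦ + |∇Φ|² = V_δ on Q_b with 0 ≤ V_δ ≤ 2λ² a.e., where b = 1 + 1/F(λ), d̃ = 1 + 3/(4F(λ)), and 1 ≤ F(λ) ≤ λ. Then there is an absolute constant C such that ∫_{Q_{d̃}} |∇Φ|² ≤ C λ². -/
open MeasureTheory

noncomputable def pdx (f : ℝ × ℝ → ℝ) (p : ℝ × ℝ) : ℝ := deriv (fun x => f (x, p.2)) p.1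
noncomputable def pdy (f : ℝ × ℝ → ℝ) (p : ℝ × ℝ) : ℝ := deriv (fun y => f (p.1, y)) p.2
noncomputable def lap (f : ℝ × ℝ → ℝ) (p : ℝ × ℝ) : ℝ := pdx (pdx f) p + pdy (pdy f) p

/-- The square `Q_r = [-r,r]²`. -/
def Qsq (r : ℝ) : Set (ℝ × ℝ) := Set.Icc (-r) r ×ˢ Set.Icc (-r) r

/-!
Multiply `ΔΦ + |∇Φ|² = V` by `θ²`, where the cutoff `θ` equals `1` on `Q_{d̃}` and is supported
in the open square of side `2ρ`, `d̃ < ρ < b`, and integrate over `Q_ρ`. By the divergence theorem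
`∫ θ² ΔΦ = -∫ 2θ ∇θ·∇Φ`, and `2θ ∇θ·∇Φ ≤ ½ θ²|∇Φ|² + 2|∇θ|²`, so
`∫ θ²|∇Φ|² ≤ 2 ∫ θ² V + 4 ∫ |∇θ|²`. Since `0 ≤ V ≤ 2λ²`, `|∇θ| ≲ F(λ) ≤ λ` and `|Q_ρ| ≤ 16`,
the right-hand side is `O(λ²)`.
-/

open Set Function Real

section PartialDerivatives

variable {f g : ℝ × ℝ → ℝ} {p : ℝ × ℝ}

lemma pdx_eq_fderiv (h : DifferentiableAt ℝ f p) : pdx f p = fderiv ℝ f p (1, 0) :=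
  (h.hasFDerivAt.comp_hasDerivAt p.1
    ((hasDerivAt_id p.1).prodMk (hasDerivAt_const p.1 p.2))).deriv

lemma pdy_eq_fderiv (h : DifferentiableAt ℝ f p) : pdy f p = fderiv ℝ f p (0, 1) :=
  (h.hasFDerivAt.comp_hasDerivAt p.2
    ((hasDerivAt_const p.2 p.1).prodMk (hasDerivAt_id p.2))).deriv

lemma pdx_mul (hf : DifferentiableAt ℝ f p) (hg : DifferentiableAt ℝ g p) :
    pdx (f * g) p = pdx f p * g p + f p * pdx g p := by
  have hι : DifferentiableAt ℝ (fun x : ℝ => (x, p.2)) p.1 := by fun_prop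
  exact deriv_mul (hf.comp p.1 hι) (hg.comp p.1 hι)

lemma pdy_mul (hf : DifferentiableAt ℝ f p) (hg : DifferentiableAt ℝ g p) :
    pdy (f * g) p = pdy f p * g p + f p * pdy g p := by
  have hι : DifferentiableAt ℝ (fun y : ℝ => (p.1, y)) p.2 := by fun_prop
  exact deriv_mul (hf.comp p.2 hι) (hg.comp p.2 hι)

variable {U : Set (ℝ × ℝ)} {m n : WithTop ℕ∞}

lemma ContDiffOn.pdx_of_isOpen (hU : IsOpen U) (hf : ContDiffOn ℝ n f U) (hmn : m + 1 ≤ n) :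
    ContDiffOn ℝ m (pdx f) U :=
  ((hf.fderiv_of_isOpen hU hmn).clm_apply contDiffOn_const).congr fun q hq =>
    pdx_eq_fderiv ((hf.differentiableOn (by rintro rfl; simp at hmn)).differentiableAt
      (hU.mem_nhds hq))

lemma ContDiffOn.pdy_of_isOpen (hU : IsOpen U) (hf : ContDiffOn ℝ n f U) (hmn : m + 1 ≤ n) :
    ContDiffOn ℝ m (pdy f) U :=
  ((hf.fderiv_of_isOpen hU hmn).clm_apply contDiffOn_const).congr fun q hq =>
    pdy_eq_fderiv ((hf.differentiableOn (by rintro rfl; simp at hmn)).differentiableAt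
      (hU.mem_nhds hq))

lemma ContDiff.continuous_pdx (hf : ContDiff ℝ 1 f) : Continuous (pdx f) :=
  continuousOn_univ.mp (hf.contDiffOn.pdx_of_isOpen isOpen_univ (m := 0) le_rfl).continuousOn

lemma ContDiff.continuous_pdy (hf : ContDiff ℝ 1 f) : Continuous (pdy f) :=
  continuousOn_univ.mp (hf.contDiffOn.pdy_of_isOpen isOpen_univ (m := 0) le_rfl).continuousOn

lemma ContDiffOn.continuousOn_gradSq (hU : IsOpen U) (hf : ContDiffOn ℝ 1 f U) :
    ContinuousOn (fun p => pdx f p ^ 2 + pdy f p ^ 2) U :=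
  ((hf.pdx_of_isOpen hU (m := 0) le_rfl).continuousOn.pow 2).add
    ((hf.pdy_of_isOpen hU (m := 0) le_rfl).continuousOn.pow 2)

lemma ContDiffOn.continuousOn_lap (hU : IsOpen U) (hf : ContDiffOn ℝ 2 f U) :
    ContinuousOn (lap f) U :=
  (((hf.pdx_of_isOpen hU (m := 1) le_rfl).pdx_of_isOpen hU (m := 0) le_rfl).continuousOn).add
    ((hf.pdy_of_isOpen hU (m := 1) le_rfl).pdy_of_isOpen hU (m := 0) le_rfl).continuousOn

end PartialDerivatives

section Square

variable {r : ℝ}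

lemma isCompact_Qsq (r : ℝ) : IsCompact (Qsq r) := isCompact_Icc.prod isCompact_Icc

lemma measurableSet_Qsq (r : ℝ) : MeasurableSet (Qsq r) :=
  measurableSet_Icc.prod measurableSet_Icc

lemma Qsq_eq_Icc (r : ℝ) : Qsq r = Icc (-r, -r) (r, r) := Icc_prod_Icc _ _ _ _

lemma measureReal_Qsq (hr : 0 ≤ r) : volume.real (Qsq r) = (2 * r) ^ 2 := by
  rw [measureReal_def, Qsq, Measure.volume_eq_prod, Measure.prod_prod, Real.volume_Icc,
    ENNReal.toReal_mul, ENNReal.toReal_ofReal (by linarith)]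
  ring

lemma ContinuousOn.integrableOn_Qsq {f : ℝ × ℝ → ℝ} {U : Set (ℝ × ℝ)}
    (hf : ContinuousOn f U) (hrU : Qsq r ⊆ U) : IntegrableOn f (Qsq r) :=
  (hf.mono hrU).integrableOn_compact (isCompact_Qsq r)

lemma setIntegral_Qsq_le {f : ℝ × ℝ → ℝ} {c : ℝ} (hr : 0 ≤ r) (hf : IntegrableOn f (Qsq r))
    (hfc : ∀ᵐ p ∂volume.restrict (Qsq r), f p ≤ c) : ∫ p in Qsq r, f p ≤ (2 * r) ^ 2 * c :=
  calc ∫ p in Qsq r, f p ≤ ∫ _ in Qsq r, c :=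
        integral_mono_ae hf (continuousOn_const.integrableOn_Qsq (subset_univ _)) hfc
    _ = (2 * r) ^ 2 * c := by rw [setIntegral_const, measureReal_Qsq hr, smul_eq_mul]

lemma integral_pdx_add_pdy_eq_zero {f g : ℝ × ℝ → ℝ} {U : Set (ℝ × ℝ)} (hr : 0 ≤ r)
    (hU : IsOpen U) (hrU : Qsq r ⊆ U) (hf : DifferentiableOn ℝ f U)
    (hg : DifferentiableOn ℝ g U) (hi : IntegrableOn (fun p => pdx f p + pdy g p) (Qsq r))
    (hfs : support f ⊆ Ioo (-r) r ×ˢ Ioo (-r) r) (hgs : support g ⊆ Ioo (-r) r ×ˢ Ioo (-r) r) :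
    ∫ p in Qsq r, (pdx f p + pdy g p) = 0 := by
  have hdiff {h : ℝ × ℝ → ℝ} (hh : DifferentiableOn ℝ h U) {p} (hp : p ∈ Qsq r) :
      DifferentiableAt ℝ h p := hh.differentiableAt (hU.mem_nhds (hrU hp))
  have hfderiv : EqOn (fun p => pdx f p + pdy g p)
      (fun p => fderiv ℝ f p (1, 0) + fderiv ℝ g p (0, 1)) (Qsq r) := fun p hp => by
    simp only [pdx_eq_fderiv (hdiff hf hp), pdy_eq_fderiv (hdiff hg hp)]
  have hvanish {h : ℝ × ℝ → ℝ} (hs : support h ⊆ Ioo (-r) r ×ˢ Ioo (-r) r) {p}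
      (hp : r ≤ |p.1| ∨ r ≤ |p.2|) : h p = 0 := by
    refine notMem_support.mp fun hp' => ?_
    obtain ⟨⟨h1, h2⟩, h3, h4⟩ := hs hp'
    rcases hp with hp | hp <;> cases abs_cases p.1 <;> cases abs_cases p.2 <;> linarith
  have hinterior : Ioo (-r) r ×ˢ Ioo (-r) r \ ∅ ⊆ Qsq r := fun p hp =>
    ⟨Ioo_subset_Icc_self hp.1.1, Ioo_subset_Icc_self hp.1.2⟩
  have hr' : r ≤ |-r| := (abs_neg r).symm ▸ le_abs_self r
  rw [setIntegral_congr_fun (measurableSet_Qsq r) hfderiv, Qsq_eq_Icc,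
    integral_divergence_prod_Icc_of_hasFDerivAt_off_countable_of_le f g
      (fderiv ℝ f) (fderiv ℝ g) (-r, -r) (r, r) ⟨by simpa using hr, by simpa using hr⟩ ∅
      countable_empty ((hf.mono hrU).continuousOn.mono (Qsq_eq_Icc r).ge)
      ((hg.mono hrU).continuousOn.mono (Qsq_eq_Icc r).ge)
      (fun p hp => (hdiff hf (hinterior hp)).hasFDerivAt)
      (fun p hp => (hdiff hg (hinterior hp)).hasFDerivAt)
      (Qsq_eq_Icc r ▸ hi.congr_fun hfderiv (measurableSet_Qsq r))]
  simp [fun x => hvanish hgs (p := (x, r)) (Or.inr (le_abs_self r)),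
    fun x => hvanish hgs (p := (x, -r)) (Or.inr hr'),
    fun y => hvanish hfs (p := (r, y)) (Or.inl (le_abs_self r)),
    fun y => hvanish hfs (p := (-r, y)) (Or.inl hr')]

end Square

section Caccioppoli

variable {Φ θ : ℝ × ℝ → ℝ} {r : ℝ} {U : Set (ℝ × ℝ)}

lemma integral_sq_mul_lap_eq (hr : 0 ≤ r) (hU : IsOpen U) (hrU : Qsq r ⊆ U)
    (hΦ : ContDiffOn ℝ 2 Φ U) (hθ : ContDiff ℝ 1 θ)
    (hθs : support θ ⊆ Ioo (-r) r ×ˢ Ioo (-r) r) :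
    ∫ p in Qsq r, θ p ^ 2 * lap Φ p =
      -∫ p in Qsq r, 2 * θ p * (pdx θ p * pdx Φ p + pdy θ p * pdy Φ p) := by
  have hP : ContDiffOn ℝ 1 (pdx Φ) U := hΦ.pdx_of_isOpen hU le_rfl
  have hQ : ContDiffOn ℝ 1 (pdy Φ) U := hΦ.pdy_of_isOpen hU le_rfl
  have hθd : Differentiable ℝ θ := hθ.differentiable one_ne_zero
  have hdiff {h : ℝ × ℝ → ℝ} (hh : ContDiffOn ℝ 1 h U) {p} (hp : p ∈ U) :
      DifferentiableAt ℝ h p :=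
    (hh.differentiableOn one_ne_zero).differentiableAt (hU.mem_nhds hp)
  have hdiv : EqOn (fun p => pdx (θ * θ * pdx Φ) p + pdy (θ * θ * pdy Φ) p)
      (fun p => θ p ^ 2 * lap Φ p + 2 * θ p * (pdx θ p * pdx Φ p + pdy θ p * pdy Φ p)) U :=
    fun p hp => by
      dsimp only
      rw [pdx_mul ((hθd p).mul (hθd p)) (hdiff hP hp), pdx_mul (hθd p) (hθd p),
        pdy_mul ((hθd p).mul (hθd p)) (hdiff hQ hp), pdy_mul (hθd p) (hθd p), lap, Pi.mul_apply]
      ring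
  have hint_lap : IntegrableOn (fun p => θ p ^ 2 * lap Φ p) (Qsq r) :=
    ((hθ.continuous.pow 2).continuousOn.mul (hΦ.continuousOn_lap hU)).integrableOn_Qsq hrU
  have hint_cross : IntegrableOn
      (fun p => 2 * θ p * (pdx θ p * pdx Φ p + pdy θ p * pdy Φ p)) (Qsq r) :=
    ((continuous_const.mul hθ.continuous).continuousOn.mul
      ((hθ.continuous_pdx.continuousOn.mul hP.continuousOn).add
        (hθ.continuous_pdy.continuousOn.mul hQ.continuousOn))).integrableOn_Qsq hrU
  have hzero := integral_pdx_add_pdy_eq_zero hr hU hrU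
    ((hθd.mul hθd).differentiableOn.mul (hP.differentiableOn one_ne_zero))
    ((hθd.mul hθd).differentiableOn.mul (hQ.differentiableOn one_ne_zero))
    ((hint_lap.add hint_cross).congr_fun (fun p hp => (hdiv (hrU hp)).symm)
      (measurableSet_Qsq r))
    ((support_mul_subset_left _ _).trans ((support_mul_subset_left _ _).trans hθs))
    ((support_mul_subset_left _ _).trans ((support_mul_subset_left _ _).trans hθs))
  rw [setIntegral_congr_fun (measurableSet_Qsq r) (hdiv.mono hrU),
    integral_add hint_lap hint_cross] at hzero
  linarith

lemma setIntegral_sq_mul_gradSq_le (hr : 0 ≤ r) (hU : IsOpen U) (hrU : Qsq r ⊆ U)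
    (hΦ : ContDiffOn ℝ 2 Φ U) (hθ : ContDiff ℝ 1 θ)
    (hθs : support θ ⊆ Ioo (-r) r ×ˢ Ioo (-r) r) :
    ∫ p in Qsq r, θ p ^ 2 * (pdx Φ p ^ 2 + pdy Φ p ^ 2) ≤
      2 * (∫ p in Qsq r, θ p ^ 2 * (lap Φ p + (pdx Φ p ^ 2 + pdy Φ p ^ 2))) +
        4 * ∫ p in Qsq r, (pdx θ p ^ 2 + pdy θ p ^ 2) := by
  have hP := (hΦ.pdx_of_isOpen hU (m := 1) le_rfl).continuousOn
  have hQ := (hΦ.pdy_of_isOpen hU (m := 1) le_rfl).continuousOn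
  have hθ2 : ContinuousOn (fun p => θ p ^ 2) U := (hθ.continuous.pow 2).continuousOn
  have hint_grad : IntegrableOn (fun p => θ p ^ 2 * (pdx Φ p ^ 2 + pdy Φ p ^ 2)) (Qsq r) :=
    (hθ2.mul ((hΦ.of_le one_le_two).continuousOn_gradSq hU)).integrableOn_Qsq hrU
  have hint_lap : IntegrableOn (fun p => θ p ^ 2 * lap Φ p) (Qsq r) :=
    (hθ2.mul (hΦ.continuousOn_lap hU)).integrableOn_Qsq hrU
  have hint_cross : IntegrableOn
      (fun p => 2 * θ p * (pdx θ p * pdx Φ p + pdy θ p * pdy Φ p)) (Qsq r) :=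
    ((continuous_const.mul hθ.continuous).continuousOn.mul
      ((hθ.continuous_pdx.continuousOn.mul hP).add
        (hθ.continuous_pdy.continuousOn.mul hQ))).integrableOn_Qsq hrU
  have hint_θ : IntegrableOn (fun p => pdx θ p ^ 2 + pdy θ p ^ 2) (Qsq r) :=
    (hθ.contDiffOn.continuousOn_gradSq isOpen_univ).integrableOn_Qsq (subset_univ _)
  have hsplit : ∫ p in Qsq r, θ p ^ 2 * (lap Φ p + (pdx Φ p ^ 2 + pdy Φ p ^ 2)) =
      (∫ p in Qsq r, θ p ^ 2 * lap Φ p) +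
        ∫ p in Qsq r, θ p ^ 2 * (pdx Φ p ^ 2 + pdy Φ p ^ 2) := by
    rw [← integral_add hint_lap hint_grad]
    simp only [mul_add]
  have hcross : ∫ p in Qsq r, 2 * θ p * (pdx θ p * pdx Φ p + pdy θ p * pdy Φ p) ≤
      1 / 2 * (∫ p in Qsq r, θ p ^ 2 * (pdx Φ p ^ 2 + pdy Φ p ^ 2)) +
        2 * ∫ p in Qsq r, (pdx θ p ^ 2 + pdy θ p ^ 2) := by
    rw [← integral_const_mul, ← integral_const_mul,
      ← integral_add (hint_grad.const_mul _) (hint_θ.const_mul _)]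
    refine setIntegral_mono_on hint_cross ((hint_grad.const_mul _).add (hint_θ.const_mul _))
      (measurableSet_Qsq r) fun p _ => ?_
    nlinarith [sq_nonneg (θ p * pdx Φ p - 2 * pdx θ p), sq_nonneg (θ p * pdy Φ p - 2 * pdy θ p)]
  linarith [integral_sq_mul_lap_eq hr hU hrU hΦ hθ hθs]

theorem setIntegral_gradSq_le_of_cutoff {d A B : ℝ} (hr : 0 ≤ r) (hU : IsOpen U)
    (hrU : Qsq r ⊆ U) (hΦ : ContDiffOn ℝ 2 Φ U) (hθ : ContDiff ℝ 1 θ)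
    (hθs : support θ ⊆ Ioo (-r) r ×ˢ Ioo (-r) r) (hdr : d ≤ r) (hθ_one : EqOn θ 1 (Qsq d))
    (hθ_sq : ∀ p, θ p ^ 2 ≤ 1)
    (hA : ∀ᵐ p ∂volume.restrict (Qsq r), 0 ≤ lap Φ p + (pdx Φ p ^ 2 + pdy Φ p ^ 2) ∧
      lap Φ p + (pdx Φ p ^ 2 + pdy Φ p ^ 2) ≤ A)
    (hB : ∀ p, pdx θ p ^ 2 + pdy θ p ^ 2 ≤ B) :
    ∫ p in Qsq d, (pdx Φ p ^ 2 + pdy Φ p ^ 2) ≤ (2 * r) ^ 2 * (2 * A + 4 * B) := by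
  have hθ2 : ContinuousOn (fun p => θ p ^ 2) U := (hθ.continuous.pow 2).continuousOn
  have hgrad := (hΦ.of_le one_le_two).continuousOn_gradSq hU
  have hsub : Qsq d ⊆ Qsq r :=
    prod_mono (Icc_subset_Icc (by linarith) hdr) (Icc_subset_Icc (by linarith) hdr)
  have hθA : ∀ᵐ p ∂volume.restrict (Qsq r),
      θ p ^ 2 * (lap Φ p + (pdx Φ p ^ 2 + pdy Φ p ^ 2)) ≤ A :=
    hA.mono fun p hp => (mul_le_of_le_one_left hp.1 (hθ_sq p)).trans hp.2
  calc ∫ p in Qsq d, (pdx Φ p ^ 2 + pdy Φ p ^ 2)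
      = ∫ p in Qsq d, θ p ^ 2 * (pdx Φ p ^ 2 + pdy Φ p ^ 2) :=
        setIntegral_congr_fun (measurableSet_Qsq d) fun p hp => by simp [hθ_one hp]
    _ ≤ ∫ p in Qsq r, θ p ^ 2 * (pdx Φ p ^ 2 + pdy Φ p ^ 2) :=
        setIntegral_mono_set ((hθ2.mul hgrad).integrableOn_Qsq hrU)
          (Filter.Eventually.of_forall fun p => by positivity) hsub.eventuallyLE
    _ ≤ 2 * (∫ p in Qsq r, θ p ^ 2 * (lap Φ p + (pdx Φ p ^ 2 + pdy Φ p ^ 2))) +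
          4 * ∫ p in Qsq r, (pdx θ p ^ 2 + pdy θ p ^ 2) :=
        setIntegral_sq_mul_gradSq_le hr hU hrU hΦ hθ hθs
    _ ≤ 2 * ((2 * r) ^ 2 * A) + 4 * ((2 * r) ^ 2 * B) := by
        gcongr
        · exact setIntegral_Qsq_le hr
            ((hθ2.mul ((hΦ.continuousOn_lap hU).add hgrad)).integrableOn_Qsq hrU) hθA
        · exact setIntegral_Qsq_le hr
            ((hθ.contDiffOn.continuousOn_gradSq isOpen_univ).integrableOn_Qsq (subset_univ _))
            (Filter.Eventually.of_forall hB)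
    _ = (2 * r) ^ 2 * (2 * A + 4 * B) := by ring

end Caccioppoli

lemma Real.exists_abs_deriv_smoothTransition_le : ∃ M, ∀ x, |deriv smoothTransition x| ≤ M := by
  have hsupp : HasCompactSupport (deriv smoothTransition) := by
    refine HasCompactSupport.intro (isCompact_Icc (a := 0) (b := 1)) fun x hx => ?_
    rcases not_and_or.mp hx with hx | hx
    · have : smoothTransition =ᶠ[nhds x] fun _ => 0 :=
        Filter.eventuallyEq_of_mem (Iio_mem_nhds (not_le.mp hx)) fun y hy =>
          smoothTransition.zero_of_nonpos hy.le
      rw [this.deriv_eq, deriv_const]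
    · have : smoothTransition =ᶠ[nhds x] fun _ => 1 :=
        Filter.eventuallyEq_of_mem (Ioi_mem_nhds (not_le.mp hx)) fun y hy =>
          smoothTransition.one_of_one_le hy.le
      rw [this.deriv_eq, deriv_const]
  have hcont : Continuous (deriv smoothTransition) :=
    smoothTransition.contDiff.continuous_deriv (n := 1) le_rfl
  exact hcont.bounded_above_of_compact_support hsupp

noncomputable def cutoff (ρ s x : ℝ) : ℝ :=
  smoothTransition (s * (ρ - x)) * smoothTransition (s * (ρ + x))

namespace cutoff

variable {ρ s x : ℝ}

lemma nonneg : 0 ≤ cutoff ρ s x :=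
  mul_nonneg (smoothTransition.nonneg _) (smoothTransition.nonneg _)

lemma le_one : cutoff ρ s x ≤ 1 :=
  mul_le_one₀ (smoothTransition.le_one _) (smoothTransition.nonneg _) (smoothTransition.le_one _)

lemma eq_one (hs : 0 < s) (hx : |x| ≤ ρ - 1 / s) : cutoff ρ s x = 1 := by
  have hs' : 1 ≤ s * (ρ - |x|) := by
    rw [← div_le_iff₀' hs]
    linarith
  rw [cutoff, smoothTransition.one_of_one_le, smoothTransition.one_of_one_le, mul_one]
  · exact hs'.trans (mul_le_mul_of_nonneg_left (by linarith [neg_abs_le x]) hs.le)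
  · exact hs'.trans (mul_le_mul_of_nonneg_left (by linarith [le_abs_self x]) hs.le)

lemma eq_zero (hs : 0 ≤ s) (hx : ρ ≤ |x|) : cutoff ρ s x = 0 := by
  rcases le_abs.mp hx with hx | hx
  · rw [cutoff, smoothTransition.zero_of_nonpos
      (mul_nonpos_of_nonneg_of_nonpos hs (by linarith)), zero_mul]
  · rw [cutoff, smoothTransition.zero_of_nonpos
      (show s * (ρ + x) ≤ 0 from mul_nonpos_of_nonneg_of_nonpos hs (by linarith)), mul_zero]

lemma contDiff {n : ℕ∞} : ContDiff ℝ n (cutoff ρ s) :=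
  (smoothTransition.contDiff.comp (by fun_prop)).mul (smoothTransition.contDiff.comp (by fun_prop))

lemma abs_deriv_le {M : ℝ} (hM : ∀ y, |deriv smoothTransition y| ≤ M) (hs : 0 ≤ s) :
    |deriv (cutoff ρ s) x| ≤ 2 * M * s := by
  have hT (y : ℝ) : HasDerivAt smoothTransition (deriv smoothTransition y) y :=
    (smoothTransition.contDiff.differentiable (n := 1) one_ne_zero y).hasDerivAt
  have h : HasDerivAt (cutoff ρ s) _ x :=
    ((hT _).comp x (((hasDerivAt_id x).const_sub ρ).const_mul s)).mul
      ((hT _).comp x (((hasDerivAt_id x).const_add ρ).const_mul s))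
  rw [h.deriv]
  simp only [Function.comp_apply, id]
  have habs (y : ℝ) : |smoothTransition y| ≤ 1 :=
    abs_le.mpr ⟨by linarith [smoothTransition.nonneg y], smoothTransition.le_one y⟩
  have hM₀ : 0 ≤ M := (abs_nonneg _).trans (hM 0)
  calc _ ≤ s * (|deriv smoothTransition (s * (ρ - x))| * |smoothTransition (s * (ρ + x))|) +
        s * (|smoothTransition (s * (ρ - x))| * |deriv smoothTransition (s * (ρ + x))|) := by
        refine (abs_add_le _ _).trans_eq ?_
        simp only [abs_mul, abs_neg, abs_one, abs_of_nonneg hs]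
        ring
    _ ≤ s * (M * 1) + s * (1 * M) := by gcongr <;> simp only [hM, habs]
    _ = 2 * M * s := by ring

end cutoff

noncomputable def squareCutoff (ρ s : ℝ) (p : ℝ × ℝ) : ℝ := cutoff ρ s p.1 * cutoff ρ s p.2

namespace squareCutoff

variable {ρ s : ℝ}

lemma contDiff : ContDiff ℝ 1 (squareCutoff ρ s) :=
  (cutoff.contDiff.comp contDiff_fst).mul (cutoff.contDiff.comp contDiff_snd)

lemma pdx_eq (p : ℝ × ℝ) :
    pdx (squareCutoff ρ s) p = deriv (cutoff ρ s) p.1 * cutoff ρ s p.2 := by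
  unfold pdx squareCutoff
  exact deriv_mul_const_field (cutoff ρ s p.2)

lemma pdy_eq (p : ℝ × ℝ) :
    pdy (squareCutoff ρ s) p = cutoff ρ s p.1 * deriv (cutoff ρ s) p.2 := by
  unfold pdy squareCutoff
  exact deriv_const_mul_field (cutoff ρ s p.1)

lemma sq_le_one (p : ℝ × ℝ) : squareCutoff ρ s p ^ 2 ≤ 1 := by
  rw [squareCutoff, mul_pow]
  exact mul_le_one₀ (pow_le_one₀ cutoff.nonneg cutoff.le_one) (by positivity)
    (pow_le_one₀ cutoff.nonneg cutoff.le_one)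

lemma support_subset (hs : 0 ≤ s) :
    support (squareCutoff ρ s) ⊆ Ioo (-ρ) ρ ×ˢ Ioo (-ρ) ρ := by
  intro p hp
  have hlt {x : ℝ} (hx : cutoff ρ s x ≠ 0) : x ∈ Ioo (-ρ) ρ :=
    abs_lt.mp (not_le.mp fun h => hx (cutoff.eq_zero hs h))
  exact ⟨hlt (left_ne_zero_of_mul hp), hlt (right_ne_zero_of_mul hp)⟩

lemma eqOn_one (hs : 0 < s) : EqOn (squareCutoff ρ s) 1 (Qsq (ρ - 1 / s)) := fun p hp => by
  rw [squareCutoff, cutoff.eq_one hs (abs_le.mpr hp.1), cutoff.eq_one hs (abs_le.mpr hp.2),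
    mul_one, Pi.one_apply]

lemma gradSq_le {M : ℝ} (hM : ∀ y, |deriv smoothTransition y| ≤ M) (hs : 0 ≤ s)
    (p : ℝ × ℝ) :
    pdx (squareCutoff ρ s) p ^ 2 + pdy (squareCutoff ρ s) p ^ 2 ≤ 2 * (2 * M * s) ^ 2 := by
  have hχ (x : ℝ) : |cutoff ρ s x| ≤ 1 :=
    abs_le.mpr ⟨by linarith [@cutoff.nonneg ρ s x], cutoff.le_one⟩
  have hχ' (x : ℝ) := cutoff.abs_deriv_le (ρ := ρ) (x := x) hM hs
  have hx : |pdx (squareCutoff ρ s) p| ≤ 2 * M * s := by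
    rw [pdx_eq, abs_mul]
    exact (mul_le_of_le_one_right (abs_nonneg _) (hχ _)).trans (hχ' _)
  have hy : |pdy (squareCutoff ρ s) p| ≤ 2 * M * s := by
    rw [pdy_eq, abs_mul]
    exact (mul_le_of_le_one_left (abs_nonneg _) (hχ _)).trans (hχ' _)
  rw [← sq_abs, ← sq_abs (pdy _ _)]
  linarith [pow_le_pow_left₀ (abs_nonneg _) hx 2, pow_le_pow_left₀ (abs_nonneg _) hy 2]

end squareCutoff

theorem gradient_L2_estimate :
    ∃ C : ℝ, 0 < C ∧
      ∀ (lam Flam : ℝ) (Φ V : ℝ × ℝ → ℝ),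
        1 ≤ lam → 1 ≤ Flam → Flam ≤ lam →
        ContDiffOn ℝ 2 Φ (Qsq (1 + 1 / Flam)) →
        (∀ p ∈ Qsq (1 + 1 / Flam),
          lap Φ p + ((pdx Φ p) ^ 2 + (pdy Φ p) ^ 2) = V p) →
        (∀ᵐ p : ℝ × ℝ ∂volume, 0 ≤ V p ∧ V p ≤ 2 * lam ^ 2) →
        ∫ p in Qsq (1 + 3 / (4 * Flam)), ((pdx Φ p) ^ 2 + (pdy Φ p) ^ 2)
          ≤ C * lam ^ 2 := by
  obtain ⟨M, hM⟩ := Real.exists_abs_deriv_smoothTransition_le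
  have hM₀ : 0 ≤ M := (abs_nonneg _).trans (hM 0)
  refine ⟨64 + 32768 * M ^ 2, by positivity, ?_⟩
  intro lam Flam Φ V hlam hF hFlam hΦ hPDE hV
  set b := 1 + 1 / Flam
  -- `θ = squareCutoff ρ s` is `1` on `Q_{ρ - 1/s} = Q_{d̃}`, vanishes off `Q_ρ ⊂ Q_b`,
  -- and has `|∇θ| ≲ s = 8 F(λ)`.
  set ρ := 1 + 7 / (8 * Flam)
  set s := 8 * Flam
  have hs : 0 < s := by positivity
  have hρ₁ : 1 ≤ ρ := le_add_of_nonneg_right (by positivity)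
  have hρ₂ : ρ ≤ 2 := by
    have : 7 / (8 * Flam) ≤ 1 := by rw [div_le_one (by positivity)]; linarith
    linarith
  have hρb : ρ < b := by
    simp only [ρ, b, add_lt_add_iff_left]
    rw [div_lt_div_iff₀ (by positivity) (by positivity)]
    linarith
  have hd : 1 + 3 / (4 * Flam) = ρ - 1 / s := by
    simp only [ρ, s]
    field_simp
    ring
  set U := Ioo (-b) b ×ˢ Ioo (-b) b
  have hUb : U ⊆ Qsq b := prod_mono Ioo_subset_Icc_self Ioo_subset_Icc_self
  have hρU : Qsq ρ ⊆ U :=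
    prod_mono (Icc_subset_Ioo (by linarith) hρb) (Icc_subset_Ioo (by linarith) hρb)
  have hA : ∀ᵐ p ∂volume.restrict (Qsq ρ), 0 ≤ lap Φ p + (pdx Φ p ^ 2 + pdy Φ p ^ 2) ∧
      lap Φ p + (pdx Φ p ^ 2 + pdy Φ p ^ 2) ≤ 2 * lam ^ 2 :=
    (ae_restrict_iff' (measurableSet_Qsq ρ)).mpr
      (hV.mono fun p hp hpρ => (hPDE p (hUb (hρU hpρ))).symm ▸ hp)
  rw [hd]
  refine (setIntegral_gradSq_le_of_cutoff (by linarith) (isOpen_Ioo.prod isOpen_Ioo) hρU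
    (hΦ.mono hUb) squareCutoff.contDiff (squareCutoff.support_subset hs.le)
    (by linarith [one_div_pos.mpr hs]) (squareCutoff.eqOn_one hs) squareCutoff.sq_le_one hA
    (squareCutoff.gradSq_le hM hs.le)).trans ?_
  calc (2 * ρ) ^ 2 * (2 * (2 * lam ^ 2) + 4 * (2 * (2 * M * s) ^ 2))
      ≤ (2 * 2) ^ 2 * (2 * (2 * lam ^ 2) + 4 * (2 * (2 * M * (8 * lam)) ^ 2)) := by
        gcongr
        linarith
    _ = (64 + 32768 * M ^ 2) * lam ^ 2 := by ring
end

section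
/- Let R_δ = [iδ, iδ + (3/2)δ] × [0,1] ⊂ ℂ and define the Cauchy-Pompeiu operator T_{R_δ}(F)(z) = π⁻¹ ∫_{R_δ} F(ξ)/(z − ξ) dA(ξ). Then there is an absolute constant C₁ such that for every bounded measurable F on R_δ, ‖T_{R_δ}(F)‖_{L^∞(R_δ)} ≤ C₁ δ log(1/δ) ‖F‖_{L^∞(R_δ)}. -/
/-!
Since `|w| ≥ |Re w|^α |Im w|^(1-α)` for `0 ≤ α ≤ 1`, the Cauchy kernel on a rectangle
`R = [c,d] × [e,f]` is dominated by a product of integrable one-dimensional singularities, whence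
`∫_R |z - ξ|⁻¹ dA(ξ) ≤ (2(d-c)^(1-α)/(1-α)) · (2(f-e)^α/α)` for `z ∈ R`.
On `R_δ` choose `α = 1/(2 log(1/δ))`: then `δ^(1-α) = e^(1/2) δ` and `1/α = 2 log(1/δ)`.
-/

open MeasureTheory

/-- The thin rectangle `R_δ = [iδ, iδ + (3/2)δ] × [0,1]` in `ℂ`. -/
def thinRect (δ : ℝ) (i : ℕ) : Set ℂ :=
  {ξ : ℂ | ξ.re ∈ Set.Icc (i * δ) (i * δ + (3 / 2) * δ) ∧ ξ.im ∈ Set.Icc 0 1}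

/-- The Cauchy–Pompeiu operator on `R_δ`. -/
noncomputable def cauchyPompeiu (δ : ℝ) (i : ℕ) (F : ℂ → ℂ) (z : ℂ) : ℂ :=
  (Real.pi : ℂ)⁻¹ * ∫ ξ in thinRect δ i, F ξ / (z - ξ) ∂volume

open Set Complex
open scoped ENNReal

lemma setLIntegral_Icc_zero_enorm_rpow_neg {p w : ℝ} (hp : p < 1) (hw : 0 ≤ w) :
    ∫⁻ t in Icc 0 w, ‖t‖ₑ ^ (-p) = ENNReal.ofReal (w ^ (1 - p) / (1 - p)) := by
  have hint : IntegrableOn (fun t : ℝ => t ^ (-p)) (Ioc 0 w) :=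
    (intervalIntegrable_iff_integrableOn_Ioc_of_le hw).1
      (intervalIntegral.intervalIntegrable_rpow' (by linarith))
  have hnonneg : 0 ≤ᵐ[volume.restrict (Ioc 0 w)] fun t : ℝ => t ^ (-p) := by
    filter_upwards [ae_restrict_mem measurableSet_Ioc] with t ht using Real.rpow_nonneg ht.1.le _
  rw [← setLIntegral_congr Ioc_ae_eq_Icc,
    setLIntegral_congr_fun measurableSet_Ioc (fun t ht => by
      rw [Real.enorm_of_nonneg ht.1.le, ENNReal.ofReal_rpow_of_pos ht.1]),
    ← ofReal_integral_eq_lintegral_ofReal hint hnonneg, ← intervalIntegral.integral_of_le hw,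
    integral_rpow (Or.inl (by linarith)), Real.zero_rpow (by linarith), sub_zero, neg_add_eq_sub]

lemma setLIntegral_Icc_enorm_sub_rpow_neg_le {p a c d : ℝ} (hp : p < 1) (ha : a ∈ Icc c d) :
    ∫⁻ x in Icc c d, ‖a - x‖ₑ ^ (-p) ≤ ENNReal.ofReal (2 * ((d - c) ^ (1 - p) / (1 - p))) := by
  have right : ∫⁻ x in Icc a d, ‖a - x‖ₑ ^ (-p) ≤ ∫⁻ t in Icc 0 (d - c), ‖t‖ₑ ^ (-p) :=
    calc ∫⁻ x in Icc a d, ‖a - x‖ₑ ^ (-p)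
        = ∫⁻ x in (· - a) ⁻¹' Icc 0 (d - a), ‖x - a‖ₑ ^ (-p) := by
          simp [enorm_sub_rev]
      _ = ∫⁻ t in Icc 0 (d - a), ‖t‖ₑ ^ (-p) :=
          (measurePreserving_sub_right volume a).setLIntegral_comp_preimage_emb
            (measurableEmbedding_subRight a) (fun t => ‖t‖ₑ ^ (-p)) (Icc 0 (d - a))
      _ ≤ _ := lintegral_mono_set (Icc_subset_Icc_right (by linarith [ha.1]))
  have left : ∫⁻ x in Icc c a, ‖a - x‖ₑ ^ (-p) ≤ ∫⁻ t in Icc 0 (d - c), ‖t‖ₑ ^ (-p) :=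
    calc ∫⁻ x in Icc c a, ‖a - x‖ₑ ^ (-p)
        = ∫⁻ x in (a - ·) ⁻¹' Icc 0 (a - c), ‖a - x‖ₑ ^ (-p) := by
          simp
      _ = ∫⁻ t in Icc 0 (a - c), ‖t‖ₑ ^ (-p) :=
          (Measure.measurePreserving_sub_left volume a).setLIntegral_comp_preimage_emb
            (measurableEmbedding_subLeft a) (fun t => ‖t‖ₑ ^ (-p)) (Icc 0 (a - c))
      _ ≤ _ := lintegral_mono_set (Icc_subset_Icc_right (by linarith [ha.2]))
  have hI : 0 ≤ (d - c) ^ (1 - p) / (1 - p) :=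
    div_nonneg (Real.rpow_nonneg (by linarith [ha.1, ha.2]) _) (by linarith)
  calc ∫⁻ x in Icc c d, ‖a - x‖ₑ ^ (-p)
      = ∫⁻ x in Icc c a ∪ Icc a d, ‖a - x‖ₑ ^ (-p) := by
        rw [Icc_union_Icc_eq_Icc ha.1 ha.2]
    _ ≤ (∫⁻ x in Icc c a, ‖a - x‖ₑ ^ (-p)) + ∫⁻ x in Icc a d, ‖a - x‖ₑ ^ (-p) :=
        lintegral_union_le _ _ _
    _ ≤ _ := by
        grw [left, right, setLIntegral_Icc_zero_enorm_rpow_neg hp (by linarith [ha.1, ha.2]),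
          ← ENNReal.ofReal_add hI hI, two_mul]

lemma enorm_inv_le_enorm_re_rpow_mul_enorm_im_rpow (w : ℂ) {α : ℝ} (hα0 : 0 ≤ α)
    (hα1 : α ≤ 1) : ‖w‖ₑ⁻¹ ≤ ‖w.re‖ₑ ^ (-α) * ‖w.im‖ₑ ^ (-(1 - α)) := by
  have hre : ‖w.re‖ₑ ≤ ‖w‖ₑ := by simpa [enorm_le_iff_norm_le] using abs_re_le_norm w
  have him : ‖w.im‖ₑ ≤ ‖w‖ₑ := by simpa [enorm_le_iff_norm_le] using abs_im_le_norm w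
  have key : ‖w.re‖ₑ ^ α * ‖w.im‖ₑ ^ (1 - α) ≤ ‖w‖ₑ :=
    calc ‖w.re‖ₑ ^ α * ‖w.im‖ₑ ^ (1 - α) ≤ ‖w‖ₑ ^ α * ‖w‖ₑ ^ (1 - α) := by gcongr
      _ = ‖w‖ₑ := by
          rw [← ENNReal.rpow_add_of_nonneg _ _ hα0 (by linarith), add_sub_cancel,
            ENNReal.rpow_one]
  rw [ENNReal.rpow_neg, ENNReal.rpow_neg,
    ← ENNReal.mul_inv (.inr (by simp [hα1])) (.inl (by simp [hα0]))]
  exact ENNReal.inv_le_inv.2 key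

lemma setLIntegral_reProdIm_mul {f g : ℝ → ℝ≥0∞} (hf : Measurable f) (hg : Measurable g)
    (s t : Set ℝ) :
    ∫⁻ ξ in s ×ℂ t, f ξ.re * g ξ.im = (∫⁻ x in s, f x) * ∫⁻ y in t, g y := by
  rw [← lintegral_prod_mul hf.aemeasurable hg.aemeasurable, Measure.prod_restrict,
    ← Measure.volume_eq_prod, ← volume_preserving_equiv_real_prod.setLIntegral_comp_preimage_emb
      measurableEquivRealProd.measurableEmbedding (fun z => f z.1 * g z.2)]
  rfl

lemma setLIntegral_reProdIm_Icc_enorm_sub_inv_le {c d e f α : ℝ} {z : ℂ}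
    (hz : z ∈ Icc c d ×ℂ Icc e f) (hα0 : 0 < α) (hα1 : α < 1) :
    ∫⁻ ξ in Icc c d ×ℂ Icc e f, ‖z - ξ‖ₑ⁻¹ ≤
      ENNReal.ofReal (2 * ((d - c) ^ (1 - α) / (1 - α)) * (2 * ((f - e) ^ α / α))) := by
  have hdc : 0 ≤ 2 * ((d - c) ^ (1 - α) / (1 - α)) :=
    mul_nonneg zero_le_two (div_nonneg (Real.rpow_nonneg (by linarith [hz.1.1, hz.1.2]) _)
      (by linarith))
  rw [ENNReal.ofReal_mul hdc]
  calc ∫⁻ ξ in Icc c d ×ℂ Icc e f, ‖z - ξ‖ₑ⁻¹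
      ≤ ∫⁻ ξ in Icc c d ×ℂ Icc e f, ‖z.re - ξ.re‖ₑ ^ (-α) * ‖z.im - ξ.im‖ₑ ^ (-(1 - α)) :=
        lintegral_mono fun ξ => by
          simpa using enorm_inv_le_enorm_re_rpow_mul_enorm_im_rpow (z - ξ) hα0.le hα1.le
    _ = (∫⁻ x in Icc c d, ‖z.re - x‖ₑ ^ (-α)) * ∫⁻ y in Icc e f, ‖z.im - y‖ₑ ^ (-(1 - α)) :=
        setLIntegral_reProdIm_mul (f := fun x => ‖z.re - x‖ₑ ^ (-α))
          (g := fun y => ‖z.im - y‖ₑ ^ (-(1 - α))) (by fun_prop) (by fun_prop) _ _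
    _ ≤ _ := by
        gcongr
        · exact setLIntegral_Icc_enorm_sub_rpow_neg_le hα1 hz.1
        · simpa using setLIntegral_Icc_enorm_sub_rpow_neg_le (p := 1 - α) (by linarith) hz.2

lemma enorm_div_le_enorm_mul_inv {𝕜 : Type*} [NormedDivisionRing 𝕜] (a b : 𝕜) :
    ‖a / b‖ₑ ≤ ‖a‖ₑ * ‖b‖ₑ⁻¹ := by
  rcases eq_or_ne b 0 with rfl | hb
  · simp
  · rw [div_eq_mul_inv, enorm_mul, enorm_inv hb]

lemma enorm_setIntegral_div_sub_le {s : Set ℂ} {F : ℂ → ℂ} {M : ℝ} (hs : MeasurableSet s)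
    (hF : ∀ ξ ∈ s, ‖F ξ‖ ≤ M) (z : ℂ) :
    ‖∫ ξ in s, F ξ / (z - ξ)‖ₑ ≤ ENNReal.ofReal M * ∫⁻ ξ in s, ‖z - ξ‖ₑ⁻¹ := by
  rw [← lintegral_const_mul' _ _ ENNReal.ofReal_ne_top]
  refine (enorm_integral_le_lintegral_enorm _).trans (setLIntegral_mono' hs fun ξ hξ => ?_)
  grw [enorm_div_le_enorm_mul_inv, ← ofReal_norm, ENNReal.ofReal_le_ofReal (hF ξ hξ)]

lemma log_one_div_gt_two_thirds {δ : ℝ} (hδ0 : 0 < δ) (hδ : δ < 1 / 2) :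
    2 / 3 < Real.log (1 / δ) := by
  have : Real.log 2 < Real.log (1 / δ) :=
    Real.log_lt_log two_pos (by rw [lt_div_iff₀ hδ0]; linarith)
  linarith [Real.log_two_gt_d9]

lemma rpow_neg_inv_two_mul_log_one_div {δ : ℝ} (hδ0 : 0 < δ) (hδ1 : δ ≠ 1) :
    δ ^ (-(2 * Real.log (1 / δ))⁻¹) = Real.exp (1 / 2) := by
  have hlog : Real.log δ ≠ 0 := Real.log_ne_zero_of_pos_of_ne_one hδ0 hδ1
  rw [Real.rpow_def_of_pos hδ0, one_div, Real.log_inv]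
  congr 1
  field_simp

lemma two_mul_rpow_one_sub_div_mul_two_div_le {δ α : ℝ} (hδ0 : 0 < δ) (hδ : δ < 1 / 2)
    (hα : α = (2 * Real.log (1 / δ))⁻¹) :
    2 * ((3 / 2 * δ) ^ (1 - α) / (1 - α)) * (2 * (1 / α)) ≤ 96 * δ * Real.log (1 / δ) := by
  have hL := log_one_div_gt_two_thirds hδ0 hδ
  have hα0 : 0 < α := hα ▸ inv_pos.2 (by linarith)
  have hα34 : α ≤ 3 / 4 := by rw [hα, inv_le_comm₀ (by linarith) (by norm_num)]; linarith
  have hpow : (3 / 2 * δ) ^ (1 - α) ≤ 3 * δ :=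
    calc (3 / 2 * δ) ^ (1 - α) = (3 / 2 : ℝ) ^ (1 - α) * (δ * δ ^ (-α)) := by
          rw [Real.mul_rpow (by norm_num) hδ0.le, sub_eq_add_neg, Real.rpow_add hδ0,
            Real.rpow_one]
      _ ≤ 3 / 2 * (δ * 2) := by
          gcongr
          · exact Real.rpow_le_self_of_one_le (by norm_num) (by linarith)
          · rw [hα, rpow_neg_inv_two_mul_log_one_div hδ0 (by linarith)]
            exact ((Real.lt_log_iff_exp_lt two_pos).1 (by linarith [Real.log_two_gt_d9])).le
      _ = 3 * δ := by ring
  have hinv : (1 - α)⁻¹ ≤ 4 := by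
    rw [inv_le_comm₀ (by linarith) (by norm_num)]; linarith
  calc 2 * ((3 / 2 * δ) ^ (1 - α) / (1 - α)) * (2 * (1 / α))
      = 4 * (3 / 2 * δ) ^ (1 - α) * (1 - α)⁻¹ * α⁻¹ := by ring
    _ ≤ 4 * (3 * δ) * 4 * (2 * Real.log (1 / δ)) := by
        rw [show α⁻¹ = 2 * Real.log (1 / δ) by rw [hα, inv_inv]]
        gcongr
        exact inv_nonneg.2 (by linarith)
    _ = 96 * δ * Real.log (1 / δ) := by ring

lemma measurableSet_thinRect (δ : ℝ) (i : ℕ) : MeasurableSet (thinRect δ i) :=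
  (isCompact_Icc.reProdIm isCompact_Icc).isClosed.measurableSet

lemma norm_cauchyPompeiu_le (δ : ℝ) (i : ℕ) (F : ℂ → ℂ) (z : ℂ) :
    ‖cauchyPompeiu δ i F z‖ ≤ ‖∫ ξ in thinRect δ i, F ξ / (z - ξ)‖ := by
  rw [cauchyPompeiu, norm_mul, norm_inv, norm_real, Real.norm_of_nonneg Real.pi_pos.le]
  exact mul_le_of_le_one_left (norm_nonneg _)
    (inv_le_one_of_one_le₀ (by linarith [Real.pi_gt_three]))

theorem cauchyPompeiu_sup_bound :
    ∃ C₁ : ℝ, 0 < C₁ ∧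
      ∀ (δ : ℝ), 0 < δ → δ < 1 / 2 → ∀ (i : ℕ), ∀ (F : ℂ → ℂ) (M : ℝ),
        Measurable F → (∀ ξ ∈ thinRect δ i, ‖F ξ‖ ≤ M) →
        ∀ z ∈ thinRect δ i,
          ‖cauchyPompeiu δ i F z‖ ≤ C₁ * δ * Real.log (1 / δ) * M := by
  refine ⟨96, by norm_num, fun δ hδ0 hδ i F M _ hF z hz => ?_⟩
  have hL := log_one_div_gt_two_thirds hδ0 hδ
  set α := (2 * Real.log (1 / δ))⁻¹ with hα
  have hα0 : 0 < α := inv_pos.2 (by linarith)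
  have hα1 : α < 1 := inv_lt_one_of_one_lt₀ (by linarith)
  have hM : 0 ≤ M := (norm_nonneg _).trans (hF ((i : ℂ) * δ) (by simp [thinRect]; linarith))
  have hkernel : ∫⁻ ξ in thinRect δ i, ‖z - ξ‖ₑ⁻¹ ≤
      ENNReal.ofReal (96 * δ * Real.log (1 / δ)) := by
    refine (setLIntegral_reProdIm_Icc_enorm_sub_inv_le hz hα0 hα1).trans
      (ENNReal.ofReal_le_ofReal ?_)
    rw [add_sub_cancel_left, sub_zero, Real.one_rpow]
    exact two_mul_rpow_one_sub_div_mul_two_div_le hδ0 hδ hα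
  have hintegral := (enorm_setIntegral_div_sub_le (measurableSet_thinRect δ i) hF z).trans
    (mul_le_mul_right hkernel _)
  rw [← ENNReal.ofReal_mul hM, ← ofReal_norm,
    ENNReal.ofReal_le_ofReal_iff (mul_nonneg hM (mul_nonneg (by positivity) (by linarith)))]
    at hintegral
  calc ‖cauchyPompeiu δ i F z‖ ≤ ‖∫ ξ in thinRect δ i, F ξ / (z - ξ)‖ :=
        norm_cauchyPompeiu_le δ i F z
    _ ≤ M * (96 * δ * Real.log (1 / δ)) := hintegral
    _ = 96 * δ * Real.log (1 / δ) * M := by ring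
end
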